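/- Let X₁,…,Xₙ be i.i.d. with density p on ℝ^d satisfying ‖p‖_∞ ≤ L, and let φ₁,…,φ_{M'} be orthonormal in L₂(ℝ^d). Define Z_n = sup over μ in the span with ‖p_μ‖ ≠ 0 of |(1/n)∑ᵢ p_μ(Xᵢ) - E[p_μ(X₁)]| / ‖p_μ‖₂. Then E[Z_n²] ≤ L·M'/n. -/

import Mathlib

/-!
Orthonormality turns the normalising factor into `‖c‖` and the numerator into `⟪c, S⟫`, where
`S l` is the centred empirical mean of `φ l`; by Cauchy–Schwarz, `Z` is the Euclidean norm of `S`.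
Each `S l` is the mean of `n` pairwise independent, identically distributed centred variables, so
`E[S l ^ 2] = Var[φ l (X 1)] / n ≤ ∫ φ l ^ 2 p / n ≤ L / n`, and summing over `l` gives `L M' / n`.
-/

open MeasureTheory ProbabilityTheory

theorem sSup_abs_sum_mul_div_sqrt_sum_sq {ι : Type*} [Fintype ι] (s : ι → ℝ) :
    sSup {z : ℝ | ∃ c : ι → ℝ, ∑ l, c l ^ 2 ≠ 0 ∧
      z = |∑ l, c l * s l| / √(∑ l, c l ^ 2)} = √(∑ l, s l ^ 2) := by
  set A := {z : ℝ | ∃ c : ι → ℝ, ∑ l, c l ^ 2 ≠ 0 ∧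
      z = |∑ l, c l * s l| / √(∑ l, c l ^ 2)}
  have upper : ∀ z ∈ A, z ≤ √(∑ l, s l ^ 2) := by
    rintro z ⟨c, hc, rfl⟩
    have hc : 0 < ∑ l, c l ^ 2 := (Finset.sum_nonneg fun l _ => sq_nonneg (c l)).lt_of_ne' hc
    rw [div_le_iff₀' (Real.sqrt_pos.2 hc), abs_le]
    have := Real.sum_mul_le_sqrt_mul_sqrt Finset.univ (-c) s
    simp only [Pi.neg_apply, neg_mul, Finset.sum_neg_distrib, neg_sq] at this
    exact ⟨by linarith, Real.sum_mul_le_sqrt_mul_sqrt Finset.univ c s⟩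
  by_cases hs : ∑ l, s l ^ 2 = 0
  · rw [hs, Real.sqrt_zero] at upper ⊢
    refine le_antisymm (Real.sSup_nonpos upper) (Real.sSup_nonneg ?_)
    rintro z ⟨c, -, rfl⟩
    positivity
  · refine IsGreatest.csSup_eq ⟨⟨s, hs, ?_⟩, upper⟩
    simp_rw [← sq, abs_of_nonneg (Finset.sum_nonneg fun l _ => sq_nonneg (s l)),
      Real.div_sqrt]

section Density

variable {α : Type*} [MeasurableSpace α] {ν : Measure α}

theorem integral_sq_sum_mul_of_orthonormal {ι : Type*} [Fintype ι] [DecidableEq ι]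
    {φ : ι → α → ℝ} (hφ : ∀ j, MemLp (φ j) 2 ν)
    (horth : ∀ j k, ∫ x, φ j x * φ k x ∂ν = if j = k then 1 else 0) (c : ι → ℝ) :
    ∫ x, (∑ l, c l * φ l x) ^ 2 ∂ν = ∑ l, c l ^ 2 := by
  have hint : ∀ j k, Integrable (fun x => c j * c k * (φ j x * φ k x)) ν :=
    fun j k => ((hφ j).integrable_mul (hφ k)).const_mul _
  calc ∫ x, (∑ l, c l * φ l x) ^ 2 ∂ν
      = ∫ x, ∑ j, ∑ k, c j * c k * (φ j x * φ k x) ∂ν := by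
        congr 1 with x
        rw [sq, Finset.sum_mul_sum]
        exact Finset.sum_congr rfl fun j _ => Finset.sum_congr rfl fun k _ => by ring
    _ = ∑ j, ∑ k, c j * c k * ∫ x, φ j x * φ k x ∂ν := by
        rw [integral_finsetSum _ fun j _ => integrable_finsetSum _ fun k _ => hint j k]
        refine Finset.sum_congr rfl fun j _ => ?_
        rw [integral_finsetSum _ fun k _ => hint j k]
        simp only [integral_const_mul]
    _ = ∑ l, c l ^ 2 := by simp [horth, sq]

theorem withDensity_ofReal_le_smul {p : α → ℝ} {L : ℝ} (hp : ∀ x, p x ≤ L) :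
    ν.withDensity (fun x => ENNReal.ofReal (p x)) ≤ ENNReal.ofReal L • ν :=
  (withDensity_mono (ae_of_all _ fun x => ENNReal.ofReal_le_ofReal (hp x))).trans_eq
    (withDensity_const _)

theorem integral_mul_eq_integral_withDensity {p : α → ℝ} (hp : Measurable p)
    (hp0 : ∀ x, 0 ≤ p x) (f : α → ℝ) :
    ∫ x, f x * p x ∂ν = ∫ x, f x ∂ν.withDensity (fun x => ENNReal.ofReal (p x)) := by
  rw [integral_withDensity_eq_integral_toReal_smul (by fun_prop)
    (ae_of_all _ fun _ => ENNReal.ofReal_lt_top)]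
  simp [ENNReal.toReal_ofReal (hp0 _), mul_comm]

theorem integral_sq_withDensity_le {p : α → ℝ} {L : ℝ} (hL : 0 ≤ L) (hp : ∀ x, p x ≤ L)
    {f : α → ℝ} (hf : MemLp f 2 ν) :
    ∫ x, f x ^ 2 ∂ν.withDensity (fun x => ENNReal.ofReal (p x)) ≤ L * ∫ x, f x ^ 2 ∂ν := by
  calc ∫ x, f x ^ 2 ∂ν.withDensity (fun x => ENNReal.ofReal (p x))
      ≤ ∫ x, f x ^ 2 ∂(ENNReal.ofReal L • ν) :=
        integral_mono_measure (withDensity_ofReal_le_smul hp)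
          (ae_of_all _ fun x => sq_nonneg (f x))
          (hf.integrable_sq.smul_measure ENNReal.ofReal_ne_top)
    _ = L * ∫ x, f x ^ 2 ∂ν := by
        rw [integral_smul_measure, ENNReal.toReal_ofReal hL, smul_eq_mul]

theorem sSup_normalized_deviation_eq {ι : Type*} [Fintype ι] [DecidableEq ι]
    {φ : ι → α → ℝ} (hφ : ∀ j, MemLp (φ j) 2 ν)
    (horth : ∀ j k, ∫ x, φ j x * φ k x ∂ν = if j = k then 1 else 0)
    {p : α → ℝ} (hp : Measurable p) (hp0 : ∀ x, 0 ≤ p x)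
    (hφp : ∀ j, Integrable (φ j) (ν.withDensity fun x => ENNReal.ofReal (p x)))
    {n : ℕ} (x : Fin n → α) :
    sSup {z : ℝ | ∃ c : ι → ℝ, ∫ y, (∑ l, c l * φ l y) ^ 2 ∂ν ≠ 0 ∧
      z = |1 / (n : ℝ) * ∑ i, ∑ l, c l * φ l (x i) - ∫ y, (∑ l, c l * φ l y) * p y ∂ν|
        / √(∫ y, (∑ l, c l * φ l y) ^ 2 ∂ν)}
      = √(∑ l, ((n : ℝ)⁻¹ * ∑ i, φ l (x i)
          - ∫ y, φ l y ∂ν.withDensity fun x => ENNReal.ofReal (p x)) ^ 2) := by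
  rw [← sSup_abs_sum_mul_div_sqrt_sum_sq]
  congr 1 with z
  have hlin : ∀ c : ι → ℝ, ∫ y, (∑ l, c l * φ l y) * p y ∂ν
      = ∑ l, c l * ∫ y, φ l y ∂ν.withDensity fun x => ENNReal.ofReal (p x) := by
    intro c
    rw [integral_mul_eq_integral_withDensity hp hp0,
      integral_finsetSum _ fun l _ => (hφp l).const_mul _]
    simp only [integral_const_mul]
  have hnum : ∀ c : ι → ℝ, 1 / (n : ℝ) * ∑ i, ∑ l, c l * φ l (x i)
      - ∑ l, c l * ∫ y, φ l y ∂ν.withDensity (fun x => ENNReal.ofReal (p x))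
      = ∑ l, c l * ((n : ℝ)⁻¹ * ∑ i, φ l (x i)
          - ∫ y, φ l y ∂ν.withDensity fun x => ENNReal.ofReal (p x)) := by
    intro c
    simp only [mul_sub, Finset.mul_sum, Finset.sum_sub_distrib]
    rw [Finset.sum_comm]
    congr 1
    exact Finset.sum_congr rfl fun l _ => Finset.sum_congr rfl fun i _ => by ring
  simp only [integral_sq_sum_mul_of_orthonormal hφ horth, hlin, hnum]

end Density

section EmpiricalMean

variable {Ω ι : Type*} [MeasurableSpace Ω] {P : Measure Ω} [IsProbabilityMeasure P]
  [Fintype ι] [Nonempty ι]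

theorem integral_sq_mean_sub_le {Y : ι → Ω → ℝ} (hY : ∀ i, MemLp (Y i) 2 P)
    (hindep : Pairwise fun i j => IndepFun (Y i) (Y j) P)
    {m L : ℝ} (hmean : ∀ i, ∫ ω, Y i ω ∂P = m) (hsq : ∀ i, ∫ ω, Y i ω ^ 2 ∂P ≤ L) :
    ∫ ω, ((Fintype.card ι : ℝ)⁻¹ * ∑ i, Y i ω - m) ^ 2 ∂P ≤ L / Fintype.card ι := by
  set N : ℝ := (Fintype.card ι : ℝ)
  have hN : 0 < N := Nat.cast_pos.2 Fintype.card_pos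
  have hsum : MemLp (∑ i, Y i) 2 P := memLp_finsetSum' _ fun i _ => hY i
  have hmean_avg : ∫ ω, N⁻¹ * ∑ i, Y i ω ∂P = m := by
    rw [integral_const_mul, integral_finsetSum _ fun i _ => (hY i).integrable one_le_two]
    simp [hmean, N, hN.ne']
  have hvar : Var[∑ i, Y i; P] ≤ N * L := by
    rw [IndepFun.variance_sum (fun i _ => hY i) fun i _ j _ hij => hindep hij]
    calc ∑ i, Var[Y i; P] ≤ ∑ _i : ι, L := Finset.sum_le_sum fun i _ =>
          (variance_le_expectation_sq (hY i).1).trans (hsq i)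
      _ = N * L := by simp [N]
  calc ∫ ω, (N⁻¹ * ∑ i, Y i ω - m) ^ 2 ∂P
      = Var[fun ω => N⁻¹ * (∑ i, Y i) ω; P] := by
        rw [variance_eq_integral (hsum.aemeasurable.const_mul _)]
        simp [hmean_avg]
    _ = N⁻¹ ^ 2 * Var[∑ i, Y i; P] := variance_const_mul _ _ _
    _ ≤ N⁻¹ ^ 2 * (N * L) := by gcongr
    _ = L / N := by field_simp

theorem integral_sq_mean_comp_sub_le {β : Type*} [MeasurableSpace β] {X : ι → Ω → β}
    (hX : ∀ i, AEMeasurable (X i) P) (hindep : Pairwise fun i j => IndepFun (X i) (X j) P)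
    {ν : Measure β} (hlaw : ∀ i, P.map (X i) = ν) {g : β → ℝ} (hg : MemLp g 2 ν) :
    ∫ ω, ((Fintype.card ι : ℝ)⁻¹ * ∑ i, g (X i ω) - ∫ x, g x ∂ν) ^ 2 ∂P
      ≤ (∫ x, g x ^ 2 ∂ν) / Fintype.card ι := by
  have hgX : ∀ i, MemLp (g ∘ X i) 2 P := fun i => ((hlaw i).symm ▸ hg).comp_of_map (hX i)
  have hintegral : ∀ f : β → ℝ, AEStronglyMeasurable f ν → ∀ i, ∫ ω, f (X i ω) ∂P = ∫ x, f x ∂ν :=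
    fun f hf i => by rw [← hlaw i, integral_map (hX i) ((hlaw i).symm ▸ hf)]
  refine integral_sq_mean_sub_le hgX
    (fun i j hij => (hindep hij).comp₀ (hX i) (hX j) ((hlaw i).symm ▸ hg.aemeasurable)
      ((hlaw j).symm ▸ hg.aemeasurable))
    (fun i => hintegral g hg.1 i) (fun i => (hintegral (fun x => g x ^ 2) (hg.1.pow 2) i).le)

end EmpiricalMean

theorem empirical_process_second_moment_bound_general
    (d n M' : ℕ) (hn : 0 < n)
    {Ω : Type*} [MeasurableSpace Ω] (P : Measure Ω) [IsProbabilityMeasure P]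
    (X : Fin n → Ω → EuclideanSpace ℝ (Fin d))
    (hXmeas : ∀ i, Measurable (X i))
    (hindep : iIndepFun X P)
    (p : EuclideanSpace ℝ (Fin d) → ℝ) (L : ℝ)
    (hp_nonneg : ∀ x, 0 ≤ p x) (hp_meas : Measurable p)
    (hp_bdd : ∀ x, p x ≤ L)
    (hlaw : ∀ i, Measure.map (X i) P
        = volume.withDensity (fun x => ENNReal.ofReal (p x)))
    (φ : Fin M' → EuclideanSpace ℝ (Fin d) → ℝ)
    (hφL2 : ∀ j, MemLp (φ j) 2 volume)
    (horth : ∀ j k, (∫ x, φ j x * φ k x) = if j = k then 1 else 0)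
    (Z : Ω → ℝ)
    (hZ : ∀ ω, Z ω = sSup {z : ℝ | ∃ μ : Fin M' → ℝ,
        (∫ x, (∑ l, μ l * φ l x) ^ 2) ≠ 0 ∧
        z = |(1 / (n : ℝ)) * (∑ i, ∑ l, μ l * φ l (X i ω))
              - ∫ x, (∑ l, μ l * φ l x) * p x|
            / Real.sqrt (∫ x, (∑ l, μ l * φ l x) ^ 2)}) :
    (∫ ω, (Z ω) ^ 2 ∂P) ≤ L * M' / n := by
  have hL : 0 ≤ L := (hp_nonneg 0).trans (hp_bdd 0)
  have : Nonempty (Fin n) := ⟨⟨0, hn⟩⟩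
  set ν := volume.withDensity (fun x => ENNReal.ofReal (p x))
  have : IsProbabilityMeasure ν :=
    hlaw ⟨0, hn⟩ ▸ Measure.isProbabilityMeasure_map (hXmeas _).aemeasurable
  have hφν : ∀ l, MemLp (φ l) 2 ν := fun l =>
    (hφL2 l).of_measure_le_smul ENNReal.ofReal_ne_top (withDensity_ofReal_le_smul hp_bdd)
  have hφ_sq : ∀ l, ∫ x, φ l x ^ 2 ∂ν ≤ L := fun l =>
    (integral_sq_withDensity_le hL hp_bdd (hφL2 l)).trans_eq (by simp [sq, horth])
  set S : Fin M' → Ω → ℝ := fun l ω => (n : ℝ)⁻¹ * ∑ i, φ l (X i ω) - ∫ x, φ l x ∂ν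
  have hZS : ∀ ω, Z ω = √(∑ l, S l ω ^ 2) := fun ω => by
    rw [hZ ω, sSup_normalized_deviation_eq hφL2 horth hp_meas hp_nonneg
      (fun l => (hφν l).integrable one_le_two)]
  have hS : ∀ l, ∫ ω, S l ω ^ 2 ∂P ≤ L / n := fun l => by
    have := integral_sq_mean_comp_sub_le (fun i => (hXmeas i).aemeasurable)
      (fun i j hij => hindep.indepFun hij) hlaw (hφν l)
    simp only [Fintype.card_fin] at this
    exact this.trans (by gcongr; exact hφ_sq l)
  have hSmem : ∀ l, MemLp (S l) 2 P := by
    intro l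
    have hφX : ∀ i, MemLp (fun ω => φ l (X i ω)) 2 P := fun i =>
      ((hlaw i).symm ▸ hφν l).comp_of_map (hXmeas i).aemeasurable
    exact ((memLp_finsetSum _ fun i _ => hφX i).const_mul _).sub (memLp_const _)
  calc ∫ ω, Z ω ^ 2 ∂P = ∑ l, ∫ ω, S l ω ^ 2 ∂P := by
        simp_rw [hZS, Real.sq_sqrt (Finset.sum_nonneg fun l _ => sq_nonneg (S l _))]
        exact integral_finsetSum _ fun l _ => (hSmem l).integrable_sq
    _ ≤ ∑ _l : Fin M', L / n := Finset.sum_le_sum fun l _ => hS l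
    _ = L * M' / n := by
        simp only [Finset.sum_const, Finset.card_univ, Fintype.card_fin, nsmul_eq_mul]
        ring

theorem empirical_process_second_moment_bound
    (d n M' : ℕ) (hn : 0 < n)
    {Ω : Type*} [MeasurableSpace Ω] (P : Measure Ω) [IsProbabilityMeasure P]
    (X : Fin n → Ω → EuclideanSpace ℝ (Fin d))
    (hXmeas : ∀ i, Measurable (X i))
    (hindep : iIndepFun X P)
    (p : EuclideanSpace ℝ (Fin d) → ℝ) (L : ℝ)
    (hp_nonneg : ∀ x, 0 ≤ p x) (hp_meas : Measurable p)
    (hp_int : (∫ x, p x) = 1) (hp_bdd : ∀ x, p x ≤ L)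
    (hlaw : ∀ i, Measure.map (X i) P
        = volume.withDensity (fun x => ENNReal.ofReal (p x)))
    (φ : Fin M' → EuclideanSpace ℝ (Fin d) → ℝ)
    (hφL2 : ∀ j, MemLp (φ j) 2 volume)
    (horth : ∀ j k, (∫ x, φ j x * φ k x) = if j = k then 1 else 0)
    (Z : Ω → ℝ)
    (hZ : ∀ ω, Z ω = sSup {z : ℝ | ∃ μ : Fin M' → ℝ,
        (∫ x, (∑ l, μ l * φ l x) ^ 2) ≠ 0 ∧
        z = |(1 / (n : ℝ)) * (∑ i, ∑ l, μ l * φ l (X i ω))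
              - ∫ x, (∑ l, μ l * φ l x) * p x|
            / Real.sqrt (∫ x, (∑ l, μ l * φ l x) ^ 2)}) :
    (∫ ω, (Z ω) ^ 2 ∂P) ≤ L * M' / n :=
  empirical_process_second_moment_bound_general d n M' hn P X hXmeas hindep p L hp_nonneg hp_meas
    hp_bdd hlaw φ hφL2 horth Z hZ
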